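/- Let X and Y be Banach spaces over ℂ and let (S,T) be a regular Fredholm pair, S : X → Y, T : Y → X. Define R_{S,0} = Y, R_{T,0} = X, R_{S,n+1} = S(R_{T,n}), R_{T,n+1} = T(R_{S,n}). Then there exist sequences of subspaces (X_2^n)_{n≥1} of X and (Y_2^n)_{n≥1} of Y such that for all n ≥ 1: (i) R_{S,n} = (R_{S,n} ∩ N(T)) ⊕ Y_2^n and R_{T,n} = (R_{T,n} ∩ N(S)) ⊕ X_2^n; (ii) X_2^n and Y_2^n are finite-dimensional and X_2^{n+1} ⊆ X_2^n, Y_2^{n+1} ⊆ Y_2^n; (iii) Y_2^n = R_{S,n} ∩ Y_2^1 and X_2^n = R_{T,n} ∩ X_2^1; (iv) the subspaces R_{S,n} ∩ N(T) and R_{T,n} ∩ N(S) are decreasing in n and are finite-dimensional for n ≥ 2; (v) S restricts to a linear isomorphism from X_2^n onto R_{S,n+1}, and T restricts to a linear isomorphism from Y_2^n onto R_{T,n+1}. -/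

import Mathlib

open Module

/-- The space `A / (A ∩ B)` for submodules `A B` of a module, realized as the quotient of `A`
by the preimage of `B` under the inclusion of `A`. -/
abbrev relQuot {X : Type*} [AddCommGroup X] [Module ℂ X] (A B : Submodule ℂ X) : Type _ :=
  ↥A ⧸ (B.comap A.subtype)

/-- The dimension of `A / (A ∩ B)`. -/
noncomputable def relDim {X : Type*} [AddCommGroup X] [Module ℂ X] (A B : Submodule ℂ X) : ℕ :=
  finrank ℂ (relQuot A B)

/-- `(S, T)` is a Fredholm pair: the four quotients `N(S)/(N(S) ∩ R(T))`,
`R(T)/(N(S) ∩ R(T))`, `N(T)/(N(T) ∩ R(S))` and `R(S)/(N(T) ∩ R(S))` are all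
finite dimensional. -/
def IsFredholmPair {X Y : Type*} [SeminormedAddCommGroup X] [NormedSpace ℂ X]
    [SeminormedAddCommGroup Y] [NormedSpace ℂ Y] (S : X →L[ℂ] Y) (T : Y →L[ℂ] X) : Prop :=
  FiniteDimensional ℂ (relQuot (LinearMap.ker (S : X →ₗ[ℂ] Y)) (LinearMap.range (T : Y →ₗ[ℂ] X))) ∧
  FiniteDimensional ℂ (relQuot (LinearMap.range (T : Y →ₗ[ℂ] X)) (LinearMap.ker (S : X →ₗ[ℂ] Y))) ∧
  FiniteDimensional ℂ (relQuot (LinearMap.ker (T : Y →ₗ[ℂ] X)) (LinearMap.range (S : X →ₗ[ℂ] Y))) ∧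
  FiniteDimensional ℂ (relQuot (LinearMap.range (S : X →ₗ[ℂ] Y)) (LinearMap.ker (T : Y →ₗ[ℂ] X)))


/-- A bounded operator `S` is regular if it has a generalized inverse `S'`
with `S = S ∘ S' ∘ S`. -/
def IsRegularOp {X Y : Type*} [SeminormedAddCommGroup X] [NormedSpace ℂ X]
    [SeminormedAddCommGroup Y] [NormedSpace ℂ Y] (S : X →L[ℂ] Y) : Prop :=
  ∃ S' : Y →L[ℂ] X, S.comp (S'.comp S) = S

/-! The chains `R_{S,n}`, `R_{T,n}` decrease, and from `n = 2` on they are finite dimensional,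
being the images of `R(T)` and `R(S)` modulo `N(S) ∩ R(T)` and `N(T) ∩ R(S)`. So they stabilise,
and on the stable members `S` and `T` are injective. Descending induction from the stable level
then produces one complement `F` of `N(S)` inside `R_{T,1}` such that `R_{T,n} ∩ F` complements
`R_{T,n} ∩ N(S)` in `R_{T,n}` for every `n ≥ 1`; these are the `X₂ⁿ`, and `Y₂ⁿ` are built in the
same way. -/

section Lattice

variable {α : Type*} [Lattice α] [BoundedOrder α] [IsModularLattice α] [ComplementedLattice α]

theorem exists_le_isCompl_of_disjoint {p q r : α} (hp : p ≤ r) (hq : q ≤ r) (hpq : Disjoint p q) :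
    ∃ F, q ≤ F ∧ F ≤ r ∧ Disjoint p F ∧ p ⊔ F = r := by
  obtain ⟨⟨F, hFr⟩, hqF, hF⟩ := Disjoint.exists_isCompl (a := (⟨q, hq⟩ : Set.Iic r)) (b := ⟨p, hp⟩)
    (by rwa [Set.Iic.disjoint_iff, disjoint_comm])
  rw [Set.Iic.isCompl_iff] at hF
  exact ⟨F, hqF, hFr, hF.1.symm, sup_comm F p ▸ hF.2⟩

theorem exists_compl_splitting_of_succ {A : ℕ → α} (hA : Antitone A) {K F' : α} {k : ℕ}
    (hF'A : F' ≤ A (k + 1)) (hKF' : Disjoint K F')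
    (hF' : ∀ n, k + 1 ≤ n → (A n ⊓ K) ⊔ (A n ⊓ F') = A n) :
    ∃ F ≤ A k, Disjoint K F ∧ ∀ n, k ≤ n → (A n ⊓ K) ⊔ (A n ⊓ F) = A n := by
  obtain ⟨F, hF'F, hFA, hdisj, hsup⟩ := exists_le_isCompl_of_disjoint inf_le_left
    (hF'A.trans (hA k.le_succ)) (hKF'.mono_left inf_le_right)
  refine ⟨F, hFA, ?_, fun n hn => ?_⟩
  · rw [disjoint_iff, ← inf_eq_right.mpr hFA, ← inf_assoc, inf_comm K]
    exact hdisj.eq_bot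
  · obtain rfl | hn := hn.eq_or_lt
    · rwa [inf_eq_right.mpr hFA]
    -- enlarging `F'` to `F` cannot destroy the splitting at the levels above `k`
    refine le_antisymm (sup_le inf_le_left inf_le_left) ?_
    calc A n = (A n ⊓ K) ⊔ (A n ⊓ F') := (hF' n hn).symm
      _ ≤ (A n ⊓ K) ⊔ (A n ⊓ F) := sup_le_sup_left (inf_le_inf_left _ hF'F) _

theorem exists_compl_splitting {A : ℕ → α} (hA : Antitone A) {K : α} {N : ℕ}
    (hN : Disjoint (A N) K) (k : ℕ) :
    ∃ F ≤ A k, Disjoint K F ∧ ∀ n, k ≤ n → (A n ⊓ K) ⊔ (A n ⊓ F) = A n := by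
  obtain ⟨M, hkM, hM⟩ : ∃ M, k ≤ M ∧ Disjoint K (A M) :=
    ⟨max N k, le_max_right N k, (hN.mono_left (hA (le_max_left N k))).symm⟩
  induction hkM using Nat.decreasingInduction with
  | self =>
    refine ⟨A M, le_rfl, hM, fun n hn => ?_⟩
    rw [inf_eq_left.mpr (hA hn), (hM.mono_right (hA hn)).symm.eq_bot, bot_sup_eq]
  | of_succ j _ ih =>
    obtain ⟨F', hF'A, hKF', hF'⟩ := ih
    exact exists_compl_splitting_of_succ hA hF'A hKF' hF'

end Lattice

section DivisionRing

variable {K V W : Type*} [DivisionRing K] [AddCommGroup V] [Module K V]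
  [AddCommGroup W] [Module K W]

theorem Submodule.antitone_chain_condition_of_finiteDimensional {A : ℕ → Submodule K V}
    (hA : Antitone A) (m : ℕ) [FiniteDimensional K (A m)] : ∃ N, ∀ n, N ≤ n → A n = A N := by
  have : ∀ n, FiniteDimensional K (A (m + n)) := fun n =>
    Submodule.finiteDimensional_of_le (hA (Nat.le_add_right m n))
  obtain ⟨n₀, hn₀⟩ := WellFoundedLT.antitone_chain_condition (f := fun n => finrank K (A (m + n)))
    fun i j hij => Submodule.finrank_mono (hA (Nat.add_le_add_left hij m))
  refine ⟨m + n₀, fun n hn => ?_⟩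
  have hrank := hn₀ (n - m) (by omega)
  rw [show m + (n - m) = n by omega] at hrank
  exact Submodule.eq_of_le_of_finrank_eq (hA hn) hrank.symm

theorem Submodule.disjoint_ker_of_map_eq_self {f : V →ₗ[K] V} {A : Submodule K V}
    [FiniteDimensional K A] (h : A.map f = A) : Disjoint A (LinearMap.ker f) := by
  have hmaps : ∀ x ∈ A, f x ∈ A := fun x hx => h ▸ Submodule.mem_map_of_mem hx
  rw [LinearMap.disjoint_ker_iff_injOn, LinearMap.injOn_iff_surjOn hmaps]
  intro y hy
  rw [← h] at hy
  exact hy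

theorem antitone_of_map_map {f : V →ₗ[K] W} {g : W →ₗ[K] V} {A : ℕ → Submodule K V}
    {B : ℕ → Submodule K W} (hA0 : A 0 = ⊤) (hB0 : B 0 = ⊤)
    (hA : ∀ n, A (n + 1) = (B n).map g) (hB : ∀ n, B (n + 1) = (A n).map f) :
    Antitone A ∧ Antitone B := by
  have hstep : ∀ n, A (n + 1) ≤ A n ∧ B (n + 1) ≤ B n := by
    intro n
    induction n with
    | zero => exact ⟨hA0 ▸ le_top, hB0 ▸ le_top⟩
    | succ n ih =>
      exact ⟨by rw [hA, hA]; exact Submodule.map_mono ih.2,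
        by rw [hB, hB]; exact Submodule.map_mono ih.1⟩
  exact ⟨antitone_nat_of_succ_le fun n => (hstep n).1, antitone_nat_of_succ_le fun n => (hstep n).2⟩

/-- Once the chains are finite dimensional they stabilise, and on the stable members `g ∘ f` and
`f ∘ g` are surjective endomorphisms of finite-dimensional spaces, hence injective. -/
theorem exists_disjoint_ker_of_map_map {f : V →ₗ[K] W} {g : W →ₗ[K] V} {A : ℕ → Submodule K V}
    {B : ℕ → Submodule K W} (hAanti : Antitone A) (hBanti : Antitone B)
    (hA : ∀ n, A (n + 1) = (B n).map g) (hB : ∀ n, B (n + 1) = (A n).map f) (m : ℕ)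
    [FiniteDimensional K (A m)] [FiniteDimensional K (B m)] :
    ∃ N, Disjoint (A N) (LinearMap.ker f) ∧ Disjoint (B N) (LinearMap.ker g) := by
  obtain ⟨NA, hNA⟩ := Submodule.antitone_chain_condition_of_finiteDimensional hAanti m
  obtain ⟨NB, hNB⟩ := Submodule.antitone_chain_condition_of_finiteDimensional hBanti m
  set N := max (max NA NB) m
  have hAN : A N = A NA := hNA N (by omega)
  have hBN : B N = B NB := hNB N (by omega)
  have : FiniteDimensional K (A N) := Submodule.finiteDimensional_of_le (hAanti (le_max_right _ m))
  have : FiniteDimensional K (B N) := Submodule.finiteDimensional_of_le (hBanti (le_max_right _ m))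
  have hAfix : (A N).map (g ∘ₗ f) = A N := by
    rw [Submodule.map_comp, ← hB, ← hA, hAN, hNA _ (by omega)]
  have hBfix : (B N).map (f ∘ₗ g) = B N := by
    rw [Submodule.map_comp, ← hA, ← hB, hBN, hNB _ (by omega)]
  exact ⟨N,
    (Submodule.disjoint_ker_of_map_eq_self hAfix).mono_right (LinearMap.ker_le_ker_comp f g),
    (Submodule.disjoint_ker_of_map_eq_self hBfix).mono_right (LinearMap.ker_le_ker_comp g f)⟩

theorem Submodule.map_eq_of_sup_eq {f : V →ₗ[K] W} {A F : Submodule K V}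
    (h : (A ⊓ LinearMap.ker f) ⊔ F = A) : F.map f = A.map f := by
  rw [← h, Submodule.map_sup, LinearMap.le_ker_iff_map.mp inf_le_right, bot_sup_eq]

end DivisionRing

section Complex

variable {V W : Type*} [AddCommGroup V] [Module ℂ V] [AddCommGroup W] [Module ℂ W]

theorem finiteDimensional_map_of_relQuot (f : V →ₗ[ℂ] W) (A : Submodule ℂ V)
    [FiniteDimensional ℂ (relQuot A (LinearMap.ker f))] : FiniteDimensional ℂ (A.map f) := by
  have : FiniteDimensional ℂ (A ⧸ LinearMap.ker (f.domRestrict A)) := by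
    rwa [LinearMap.ker_domRestrict]
  exact (LinearMap.range_domRestrict A f ▸ (f.domRestrict A).quotKerEquivRange).finiteDimensional

theorem finiteDimensional_of_disjoint_of_relQuot {A B F : Submodule ℂ V} (hF : F ≤ A)
    (hBF : Disjoint B F) [FiniteDimensional ℂ (relQuot A B)] : FiniteDimensional ℂ F := by
  refine FiniteDimensional.of_injective ((B.comap A.subtype).mkQ ∘ₗ Submodule.inclusion hF) ?_
  rw [← LinearMap.ker_eq_bot, eq_bot_iff]
  rintro ⟨x, hx⟩ hker
  simp only [LinearMap.mem_ker, LinearMap.comp_apply, Submodule.mkQ_apply,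
    Submodule.Quotient.mk_eq_zero, Submodule.mem_comap] at hker
  simpa using hBF.le_bot ⟨hker, hx⟩

theorem exists_compl_ker_family (f : V →ₗ[ℂ] W) {A : ℕ → Submodule ℂ V} (hA : Antitone A)
    {N : ℕ} (hN : Disjoint (A N) (LinearMap.ker f))
    [FiniteDimensional ℂ (relQuot (A 1) (LinearMap.ker f))] :
    ∃ F : ℕ → Submodule ℂ V, ∀ n, 1 ≤ n →
      (Disjoint (A n ⊓ LinearMap.ker f) (F n) ∧ (A n ⊓ LinearMap.ker f) ⊔ F n = A n) ∧
      (FiniteDimensional ℂ (F n) ∧ F (n + 1) ≤ F n) ∧ F n = A n ⊓ F 1 ∧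
      ((F n).map f = (A n).map f ∧ Disjoint (LinearMap.ker f) (F n)) := by
  obtain ⟨F, hFA, hKF, hsplit⟩ := exists_compl_splitting hA hN 1
  have : FiniteDimensional ℂ F := finiteDimensional_of_disjoint_of_relQuot hFA hKF
  refine ⟨fun n => A n ⊓ F, fun n hn => ⟨⟨hKF.mono inf_le_right inf_le_right, hsplit n hn⟩,
    ⟨Submodule.finiteDimensional_of_le inf_le_right, inf_le_inf_right F (hA n.le_succ)⟩,
    congrArg (A n ⊓ ·) (inf_eq_right.mpr hFA).symm, Submodule.map_eq_of_sup_eq (hsplit n hn),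
    hKF.mono_right inf_le_right⟩⟩

end Complex

theorem regularFredholmPair_structure_general {X Y : Type*}
    [NormedAddCommGroup X] [NormedSpace ℂ X]
    [NormedAddCommGroup Y] [NormedSpace ℂ Y]
    (S : X →L[ℂ] Y) (T : Y →L[ℂ] X) (h : IsFredholmPair S T)
    (RS : ℕ → Submodule ℂ Y) (RT : ℕ → Submodule ℂ X)
    (hRS0 : RS 0 = ⊤) (hRT0 : RT 0 = ⊤)
    (hRS : ∀ n, RS (n + 1) = Submodule.map (S : X →ₗ[ℂ] Y) (RT n))
    (hRT : ∀ n, RT (n + 1) = Submodule.map (T : Y →ₗ[ℂ] X) (RS n)) :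
    ∃ (X2 : ℕ → Submodule ℂ X) (Y2 : ℕ → Submodule ℂ Y),
      ∀ n, 1 ≤ n →
        -- (i) direct sum decompositions
        (Disjoint (RS n ⊓ LinearMap.ker (T : Y →ₗ[ℂ] X)) (Y2 n) ∧
          (RS n ⊓ LinearMap.ker (T : Y →ₗ[ℂ] X)) ⊔ Y2 n = RS n ∧
          Disjoint (RT n ⊓ LinearMap.ker (S : X →ₗ[ℂ] Y)) (X2 n) ∧
          (RT n ⊓ LinearMap.ker (S : X →ₗ[ℂ] Y)) ⊔ X2 n = RT n) ∧
        -- (ii) finite dimensionality and monotonicity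
        (FiniteDimensional ℂ ↥(X2 n) ∧ FiniteDimensional ℂ ↥(Y2 n) ∧
          X2 (n + 1) ≤ X2 n ∧ Y2 (n + 1) ≤ Y2 n) ∧
        -- (iii) description via the first terms
        (Y2 n = RS n ⊓ Y2 1 ∧ X2 n = RT n ⊓ X2 1) ∧
        -- (iv) the kernel parts are decreasing and finite dimensional for n ≥ 2
        (RS (n + 1) ⊓ LinearMap.ker (T : Y →ₗ[ℂ] X) ≤ RS n ⊓ LinearMap.ker (T : Y →ₗ[ℂ] X) ∧
          RT (n + 1) ⊓ LinearMap.ker (S : X →ₗ[ℂ] Y) ≤ RT n ⊓ LinearMap.ker (S : X →ₗ[ℂ] Y) ∧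
          (2 ≤ n → FiniteDimensional ℂ ↥(RS n ⊓ LinearMap.ker (T : Y →ₗ[ℂ] X)) ∧
            FiniteDimensional ℂ ↥(RT n ⊓ LinearMap.ker (S : X →ₗ[ℂ] Y)))) ∧
        -- (v) S and T restrict to isomorphisms
        (Submodule.map (S : X →ₗ[ℂ] Y) (X2 n) = RS (n + 1) ∧ Disjoint (LinearMap.ker (S : X →ₗ[ℂ] Y)) (X2 n) ∧
          Submodule.map (T : Y →ₗ[ℂ] X) (Y2 n) = RT (n + 1) ∧ Disjoint (LinearMap.ker (T : Y →ₗ[ℂ] X)) (Y2 n)) := by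
  obtain ⟨hRTanti, hRSanti⟩ := antitone_of_map_map hRT0 hRS0 hRT hRS
  have hRT1 : RT 1 = LinearMap.range (T : Y →ₗ[ℂ] X) := by rw [hRT, hRS0, Submodule.map_top]
  have hRS1 : RS 1 = LinearMap.range (S : X →ₗ[ℂ] Y) := by rw [hRS, hRT0, Submodule.map_top]
  obtain ⟨-, hfdT, -, hfdS⟩ := h
  rw [← hRT1] at hfdT
  rw [← hRS1] at hfdS
  have : FiniteDimensional ℂ (RT 2) := hRT 1 ▸ finiteDimensional_map_of_relQuot _ _
  have : FiniteDimensional ℂ (RS 2) := hRS 1 ▸ finiteDimensional_map_of_relQuot _ _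
  obtain ⟨N, hNT, hNS⟩ := exists_disjoint_ker_of_map_map hRTanti hRSanti hRT hRS 2
  obtain ⟨X2, hX2⟩ := exists_compl_ker_family (S : X →ₗ[ℂ] Y) hRTanti hNT
  obtain ⟨Y2, hY2⟩ := exists_compl_ker_family (T : Y →ₗ[ℂ] X) hRSanti hNS
  refine ⟨X2, Y2, fun n hn => ?_⟩
  obtain ⟨⟨hXdisj, hXsup⟩, ⟨hXfd, hXmono⟩, hX1, hXmap, hXker⟩ := hX2 n hn
  obtain ⟨⟨hYdisj, hYsup⟩, ⟨hYfd, hYmono⟩, hY1, hYmap, hYker⟩ := hY2 n hn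
  refine ⟨⟨hYdisj, hYsup, hXdisj, hXsup⟩, ⟨hXfd, hYfd, hXmono, hYmono⟩, ⟨hY1, hX1⟩,
    ⟨inf_le_inf_right _ (hRSanti n.le_succ), inf_le_inf_right _ (hRTanti n.le_succ), fun hn2 =>
      ⟨Submodule.finiteDimensional_of_le (inf_le_left.trans (hRSanti hn2)),
        Submodule.finiteDimensional_of_le (inf_le_left.trans (hRTanti hn2))⟩⟩,
    ⟨hXmap.trans (hRS n).symm, hXker, hYmap.trans (hRT n).symm, hYker⟩⟩

/-- Structure theorem for the sequences `R_{S,n}`, `R_{T,n}` of a regular Fredholm pair: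
there are (finite dimensional, decreasing) subspaces `X₂ⁿ`, `Y₂ⁿ` with
`R_{S,n} = (R_{S,n} ∩ N(T)) ⊕ Y₂ⁿ`, `R_{T,n} = (R_{T,n} ∩ N(S)) ⊕ X₂ⁿ`,
`Y₂ⁿ = R_{S,n} ∩ Y₂¹`, `X₂ⁿ = R_{T,n} ∩ X₂¹`; the subspaces `R_{S,n} ∩ N(T)` and
`R_{T,n} ∩ N(S)` are decreasing and finite dimensional for `n ≥ 2`; and `S`, `T`
restrict to linear isomorphisms `X₂ⁿ ≅ R_{S,n+1}`, `Y₂ⁿ ≅ R_{T,n+1}`. -/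
theorem regularFredholmPair_structure {X Y : Type*}
    [NormedAddCommGroup X] [NormedSpace ℂ X] [CompleteSpace X]
    [NormedAddCommGroup Y] [NormedSpace ℂ Y] [CompleteSpace Y]
    (S : X →L[ℂ] Y) (T : Y →L[ℂ] X) (h : IsFredholmPair S T)
    (hS : IsRegularOp S) (hT : IsRegularOp T)
    (RS : ℕ → Submodule ℂ Y) (RT : ℕ → Submodule ℂ X)
    (hRS0 : RS 0 = ⊤) (hRT0 : RT 0 = ⊤)
    (hRS : ∀ n, RS (n + 1) = Submodule.map (S : X →ₗ[ℂ] Y) (RT n))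
    (hRT : ∀ n, RT (n + 1) = Submodule.map (T : Y →ₗ[ℂ] X) (RS n)) :
    ∃ (X2 : ℕ → Submodule ℂ X) (Y2 : ℕ → Submodule ℂ Y),
      ∀ n, 1 ≤ n →
        -- (i) direct sum decompositions
        (Disjoint (RS n ⊓ LinearMap.ker (T : Y →ₗ[ℂ] X)) (Y2 n) ∧
          (RS n ⊓ LinearMap.ker (T : Y →ₗ[ℂ] X)) ⊔ Y2 n = RS n ∧
          Disjoint (RT n ⊓ LinearMap.ker (S : X →ₗ[ℂ] Y)) (X2 n) ∧
          (RT n ⊓ LinearMap.ker (S : X →ₗ[ℂ] Y)) ⊔ X2 n = RT n) ∧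
        -- (ii) finite dimensionality and monotonicity
        (FiniteDimensional ℂ ↥(X2 n) ∧ FiniteDimensional ℂ ↥(Y2 n) ∧
          X2 (n + 1) ≤ X2 n ∧ Y2 (n + 1) ≤ Y2 n) ∧
        -- (iii) description via the first terms
        (Y2 n = RS n ⊓ Y2 1 ∧ X2 n = RT n ⊓ X2 1) ∧
        -- (iv) the kernel parts are decreasing and finite dimensional for n ≥ 2
        (RS (n + 1) ⊓ LinearMap.ker (T : Y →ₗ[ℂ] X) ≤ RS n ⊓ LinearMap.ker (T : Y →ₗ[ℂ] X) ∧
          RT (n + 1) ⊓ LinearMap.ker (S : X →ₗ[ℂ] Y) ≤ RT n ⊓ LinearMap.ker (S : X →ₗ[ℂ] Y) ∧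
          (2 ≤ n → FiniteDimensional ℂ ↥(RS n ⊓ LinearMap.ker (T : Y →ₗ[ℂ] X)) ∧
            FiniteDimensional ℂ ↥(RT n ⊓ LinearMap.ker (S : X →ₗ[ℂ] Y)))) ∧
        -- (v) S and T restrict to isomorphisms
        (Submodule.map (S : X →ₗ[ℂ] Y) (X2 n) = RS (n + 1) ∧ Disjoint (LinearMap.ker (S : X →ₗ[ℂ] Y)) (X2 n) ∧
          Submodule.map (T : Y →ₗ[ℂ] X) (Y2 n) = RT (n + 1) ∧ Disjoint (LinearMap.ker (T : Y →ₗ[ℂ] X)) (Y2 n)) :=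
  regularFredholmPair_structure_general S T h RS RT hRS0 hRT0 hRS hRT
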